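/- Let d ≥ 1, α ∈ (0, β), β ∈ (0, d+2]. There exists a constant N = N(d, α, β) such that for every measurable f ≥ 0 on ℝ^{d+1} and every ρ ∈ (0, ∞) one has P_α(1_{C_ρ} f)(0) ≤ N ρ^α M f(0) and P_α(1_{C_ρ^c} f)(0) ≤ N ρ^{α-β} M_β f(0). -/

import Mathlib

open MeasureTheory Set ENNReal Filter

noncomputable section

/-- Euclidean space `ℝ^d`. -/
abbrev Ed (d : ℕ) := EuclideanSpace ℝ (Fin d)

/-- Points of `ℝ^{d+1}`: `z = (t, x)`. -/
abbrev Pt (d : ℕ) := ℝ × Ed d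

/-- The parabolic cylinder `C_ρ(t,x)`. -/
def pCyl (d : ℕ) (ρ : ℝ) (z : Pt d) : Set (Pt d) :=
  {w | dist z.2 w.2 < ρ ∧ z.1 ≤ w.1 ∧ w.1 < z.1 + ρ ^ 2}

/-- The average `⨍_{C_ρ(z)} f`. -/
def pAvg (d : ℕ) (ρ : ℝ) (z : Pt d) (f : Pt d → ℝ≥0∞) : ℝ≥0∞ :=
  (volume (pCyl d ρ z))⁻¹ * ∫⁻ w in pCyl d ρ z, f w

/-- The fractional maximal function `M_β f`. -/
def Mbeta (d : ℕ) (β : ℝ) (f : Pt d → ℝ≥0∞) (z : Pt d) : ℝ≥0∞ :=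
  ⨆ (ρ : ℝ) (_ : 0 < ρ), ENNReal.ofReal (ρ ^ β) * pAvg d ρ z f

/-- The kernel `p_α(s, r)`. -/
def pKer (d : ℕ) (α : ℝ) (s r : ℝ) : ℝ≥0∞ :=
  if 0 < s then ENNReal.ofReal (s ^ (-(((d : ℝ) + 2 - α) / 2)) * Real.exp (-(r ^ 2) / s)) else 0

/-- The parabolic potential `P_α f`. -/
def Palpha (d : ℕ) (α : ℝ) (f : Pt d → ℝ≥0∞) (z : Pt d) : ℝ≥0∞ :=
  ∫⁻ w : Pt d, pKer d α w.1 ‖w.2‖ * f (z.1 + w.1, z.2 + w.2)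

/-- The parabolic Morrey norm `‖f‖_{E_{p,β}(Q)}`. -/
def MorreyNorm (d : ℕ) (p β : ℝ) (Q : Set (Pt d)) (f : Pt d → ℝ≥0∞) : ℝ≥0∞ :=
  ⨆ (ρ : ℝ) (_ : 0 < ρ) (z : Pt d) (_ : z ∈ Q),
    ENNReal.ofReal (ρ ^ β) * (pAvg d ρ z fun w => Q.indicator f w ^ p) ^ (1 / p)

/-- The `L_p`-norm on `ℝ^{d+1}`. -/
def LpNormE (d : ℕ) (p : ℝ) (f : Pt d → ℝ≥0∞) : ℝ≥0∞ :=
  (∫⁻ z : Pt d, f z ^ p) ^ (1 / p)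

/-- The mixed norm `‖f‖_{L_{q₁,q₂}}`. -/
def MixedNorm (d : ℕ) (q₁ q₂ : ℝ) (f : Pt d → ℝ≥0∞) : ℝ≥0∞ :=
  (∫⁻ t : ℝ, (∫⁻ x : Ed d, f (t, x) ^ q₁) ^ (q₂ / q₁)) ^ (1 / q₂)

/-- The normalized mixed norm `‖f‖_{L_{q₁,q₂}(Γ)}`. -/
def MixedNormOn (d : ℕ) (q₁ q₂ : ℝ) (Γ : Set (Pt d)) (f : Pt d → ℝ≥0∞) : ℝ≥0∞ :=
  (MixedNorm d q₁ q₂ (Γ.indicator 1))⁻¹ * MixedNorm d q₁ q₂ (Γ.indicator f)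

/-- The mixed-norm parabolic Morrey norm `‖f‖_{E_{q₁,q₂,β}(Q)}`. -/
def MixedMorrey (d : ℕ) (q₁ q₂ β : ℝ) (Q : Set (Pt d)) (f : Pt d → ℝ≥0∞) : ℝ≥0∞ :=
  ⨆ (ρ : ℝ) (_ : 0 < ρ) (z : Pt d) (_ : z ∈ Q),
    ENNReal.ofReal (ρ ^ β) * MixedNormOn d q₁ q₂ (pCyl d ρ z) (Q.indicator f)

/-- The symmetric parabolic maximal function `M̂ f`. -/
def pMax (d : ℕ) (f : Pt d → ℝ≥0∞) (z : Pt d) : ℝ≥0∞ :=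
  ⨆ (r : ℝ) (_ : 0 < r) (w : Pt d) (_ : z ∈ pCyl d r w), pAvg d r w f

/-- The time derivative `∂_t u`. -/
def timeDeriv (d : ℕ) (u : Pt d → ℝ) (z : Pt d) : ℝ :=
  fderiv ℝ u z ((1 : ℝ), (0 : Ed d))

/-- The spatial partial derivative `D_i u`. -/
def spDeriv (d : ℕ) (i : Fin d) (u : Pt d → ℝ) (z : Pt d) : ℝ :=
  fderiv ℝ u z ((0 : ℝ), EuclideanSpace.single i (1 : ℝ))

/-- The Euclidean norm of the spatial gradient `|Du|`. -/
def gradNorm (d : ℕ) (u : Pt d → ℝ) (z : Pt d) : ℝ :=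
  Real.sqrt (∑ i : Fin d, spDeriv d i u z ^ 2)

/-- The spatial Laplacian `Δu`. -/
def lap (d : ℕ) (u : Pt d → ℝ) (z : Pt d) : ℝ :=
  ∑ i : Fin d, spDeriv d i (spDeriv d i u) z

/-- The (Frobenius) norm of the spatial Hessian `|D²u|`. -/
def hessNorm (d : ℕ) (u : Pt d → ℝ) (z : Pt d) : ℝ :=
  Real.sqrt (∑ i : Fin d, ∑ j : Fin d, spDeriv d i (spDeriv d j u) z ^ 2)

/-! The kernel is controlled by the parabolic distance to the origin: with `a = (d+2-α)/2`,
`s^{-a} e^{-|y|²/s} ≤ (s + |y|²/a)^{-a}` (raise `1 + t ≤ e^t` to the power `a`), so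
`p_α ≤ c r^{α-(d+2)}` outside `C_{r/2}`. Cover `C_ρ` by the shells `C_{ρ2^{-k}} \ C_{ρ2^{-k-1}}` and
its complement by the shells `C_{ρ2^{k+1}} \ C_{ρ2^k}`; on a shell of outer radius `r` we have
`∫_{C_r} f ≤ |B_1| r^{d+2-β} M_β f(0)`. Both potentials are thereby bounded by geometric series
`∑ r_k^{α-β}`, which converge because `α > 0` for the inner part (`β = 0`) and `α < β` for the
outer one. -/

theorem Real.rpow_neg_mul_exp_neg_div_le {a s x : ℝ} (ha : 0 < a) (hs : 0 < s) (hx : 0 ≤ x) :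
    s ^ (-a) * Real.exp (-x / s) ≤ (s + x / a) ^ (-a) := by
  have hexp : Real.exp (-x / s) = Real.exp (x / (a * s)) ^ (-a) := by
    rw [← Real.exp_mul]; congr 1; field_simp
  have hmono : Real.exp (x / (a * s)) ^ (-a) ≤ (1 + x / (a * s)) ^ (-a) :=
    Real.rpow_le_rpow_of_nonpos (by positivity) (by linarith [Real.add_one_le_exp (x / (a * s))])
      (by linarith)
  calc s ^ (-a) * Real.exp (-x / s) ≤ s ^ (-a) * (1 + x / (a * s)) ^ (-a) := by
        rw [hexp]; gcongr
    _ = (s + x / a) ^ (-a) := by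
        rw [← Real.mul_rpow hs.le (by positivity)]; congr 1; field_simp

theorem Real.rpow_neg_mul_exp_neg_div_le_of_le {a s x σ : ℝ} (ha : 0 < a) (hs : 0 < s)
    (hx : 0 ≤ x) (hσ : 0 < σ) (h : σ ^ 2 ≤ s ∨ σ ^ 2 ≤ x) :
    s ^ (-a) * Real.exp (-x / s) ≤ ((1 + a) / σ ^ 2) ^ a := by
  have hlow : σ ^ 2 / (1 + a) ≤ s + x / a := by
    rcases h with h | h
    · have : σ ^ 2 / (1 + a) ≤ σ ^ 2 := div_le_self (by positivity) (by linarith)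
      have : 0 ≤ x / a := by positivity
      linarith
    · have : σ ^ 2 / (1 + a) ≤ x / a := by gcongr; linarith
      linarith
  calc s ^ (-a) * Real.exp (-x / s) ≤ (s + x / a) ^ (-a) := rpow_neg_mul_exp_neg_div_le ha hs hx
    _ ≤ (σ ^ 2 / (1 + a)) ^ (-a) := Real.rpow_le_rpow_of_nonpos (by positivity) hlow (by linarith)
    _ = ((1 + a) / σ ^ 2) ^ a := by
        rw [Real.rpow_neg (by positivity), ← Real.inv_rpow (by positivity), inv_div]

theorem ENNReal.tsum_ofReal_mul_pow_rpow {t b : ℝ} (ht : 0 ≤ t) (hb : 0 ≤ b) (x : ℝ) :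
    ∑' k : ℕ, ENNReal.ofReal ((t * b ^ k) ^ x) =
      ENNReal.ofReal (t ^ x) * (1 - ENNReal.ofReal (b ^ x))⁻¹ := by
  have hterm : ∀ k : ℕ, ENNReal.ofReal ((t * b ^ k) ^ x) =
      ENNReal.ofReal (t ^ x) * ENNReal.ofReal (b ^ x) ^ k := fun k => by
    rw [Real.mul_rpow ht (by positivity), ← Real.rpow_pow_comm hb,
      ENNReal.ofReal_mul (by positivity), ENNReal.ofReal_pow (by positivity)]
  simp_rw [hterm, ENNReal.tsum_mul_left, ENNReal.tsum_geometric]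

theorem ENNReal.inv_one_sub_ofReal_ne_top {q : ℝ} (hq : q < 1) : (1 - ENNReal.ofReal q)⁻¹ ≠ ⊤ := by
  simpa [tsub_eq_zero_iff_le] using ENNReal.ofReal_lt_one.mpr hq

theorem exists_mem_and_notMem_succ {X : Type*} {S : ℕ → Set X} {x : X} (h₀ : x ∈ S 0) {n : ℕ}
    (hn : x ∉ S n) : ∃ k, x ∈ S k ∧ x ∉ S (k + 1) := by
  by_contra! h
  exact hn (Nat.rec h₀ (fun k hk => h k hk) n)

theorem lintegral_mul_le_tsum_mul_setLIntegral {X ι : Type*} [MeasurableSpace X] [Countable ι]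
    (μ : Measure X) {g f : X → ℝ≥0∞} (hf : Measurable f) {s : ι → Set X}
    (hs : ∀ i, MeasurableSet (s i)) {c : ι → ℝ≥0∞}
    (hg : ∀ x, g x ≠ 0 → ∃ i, x ∈ s i ∧ g x ≤ c i) :
    ∫⁻ x, g x * f x ∂μ ≤ ∑' i, c i * ∫⁻ x in s i, f x ∂μ := by
  have hpt : ∀ x, g x * f x ≤ ∑' i, c i * (s i).indicator f x := by
    intro x
    by_cases hx : g x = 0
    · simp [hx]
    obtain ⟨i, hxi, hgi⟩ := hg x hx
    calc g x * f x ≤ c i * (s i).indicator f x := by rw [indicator_of_mem hxi]; gcongr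
      _ ≤ _ := ENNReal.le_tsum i
  calc ∫⁻ x, g x * f x ∂μ ≤ ∫⁻ x, ∑' i, c i * (s i).indicator f x ∂μ := lintegral_mono hpt
    _ = ∑' i, c i * ∫⁻ x in s i, f x ∂μ := by
        rw [lintegral_tsum fun i => ((hf.indicator (hs i)).const_mul _).aemeasurable]
        simp_rw [lintegral_const_mul _ (hf.indicator (hs _)), lintegral_indicator (hs _)]

theorem pCyl_eq_prod (d : ℕ) (r : ℝ) (z : Pt d) :
    pCyl d r z = Ico z.1 (z.1 + r ^ 2) ×ˢ Metric.ball z.2 r := by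
  ext w
  simp only [pCyl, mem_ofPred_eq, mem_prod, mem_Ico, Metric.mem_ball, dist_comm]
  tauto

theorem mem_pCyl_zero {d : ℕ} {r : ℝ} {w : Pt d} :
    w ∈ pCyl d r 0 ↔ ‖w.2‖ < r ∧ 0 ≤ w.1 ∧ w.1 < r ^ 2 := by
  simp [pCyl]

theorem measurableSet_pCyl (d : ℕ) (r : ℝ) (z : Pt d) : MeasurableSet (pCyl d r z) := by
  rw [pCyl_eq_prod]
  exact measurableSet_Ico.prod measurableSet_ball

theorem volume_pCyl (d : ℕ) {r : ℝ} (hr : 0 < r) (z : Pt d) :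
    volume (pCyl d r z) =
      ENNReal.ofReal (r ^ ((d : ℝ) + 2)) * volume (Metric.ball (0 : Ed d) 1) := by
  rw [pCyl_eq_prod, Measure.volume_eq_prod, Measure.prod_prod, Real.volume_Ico,
    add_sub_cancel_left, Measure.addHaar_ball_of_pos _ _ hr, finrank_euclideanSpace_fin,
    ← mul_assoc, ← ENNReal.ofReal_mul (by positivity), ← pow_add,
    show ((d : ℝ) + 2) = ((2 + d : ℕ) : ℝ) by push_cast; ring, Real.rpow_natCast]

theorem setLIntegral_pCyl_le_Mbeta (d : ℕ) (β : ℝ) (f : Pt d → ℝ≥0∞) {r : ℝ} (hr : 0 < r)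
    (z : Pt d) :
    ∫⁻ w in pCyl d r z, f w ≤
      ENNReal.ofReal (r ^ ((d : ℝ) + 2 - β)) * volume (Metric.ball (0 : Ed d) 1) *
        Mbeta d β f z := by
  have hvol := volume_pCyl d hr z
  have hvol₀ : volume (pCyl d r z) ≠ 0 := by
    rw [hvol]
    exact mul_ne_zero (by simpa using Real.rpow_pos_of_pos hr _)
      (Metric.measure_ball_pos _ _ one_pos).ne'
  have hvolTop : volume (pCyl d r z) ≠ ⊤ :=
    hvol ▸ ENNReal.mul_ne_top ENNReal.ofReal_ne_top measure_ball_lt_top.ne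
  have hsplit : ENNReal.ofReal (r ^ ((d : ℝ) + 2)) =
      ENNReal.ofReal (r ^ ((d : ℝ) + 2 - β)) * ENNReal.ofReal (r ^ β) := by
    rw [← ENNReal.ofReal_mul (by positivity), ← Real.rpow_add hr, sub_add_cancel]
  have hM : ENNReal.ofReal (r ^ β) * pAvg d r z f ≤ Mbeta d β f z :=
    le_iSup₂ (f := fun ρ (_ : 0 < ρ) => ENNReal.ofReal (ρ ^ β) * pAvg d ρ z f) r hr
  calc ∫⁻ w in pCyl d r z, f w = volume (pCyl d r z) * pAvg d r z f := by
        rw [pAvg, ← mul_assoc, ENNReal.mul_inv_cancel hvol₀ hvolTop, one_mul]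
    _ = ENNReal.ofReal (r ^ ((d : ℝ) + 2 - β)) * volume (Metric.ball (0 : Ed d) 1) *
          (ENNReal.ofReal (r ^ β) * pAvg d r z f) := by rw [hvol, hsplit]; ring
    _ ≤ _ := by gcongr

theorem pKer_le_of_notMem_pCyl {d : ℕ} {α : ℝ} (hα : α < (d : ℝ) + 2) {r : ℝ} (hr : 0 < r)
    {w : Pt d} (hw : w ∉ pCyl d (r / 2) 0) :
    pKer d α w.1 ‖w.2‖ ≤
      ENNReal.ofReal ((4 * (1 + ((d : ℝ) + 2 - α) / 2)) ^ (((d : ℝ) + 2 - α) / 2) *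
        r ^ (α - ((d : ℝ) + 2))) := by
  set a := ((d : ℝ) + 2 - α) / 2
  have hconst : ((1 + a) / (r / 2) ^ 2) ^ a = (4 * (1 + a)) ^ a * r ^ (α - ((d : ℝ) + 2)) := by
    rw [show (1 + a) / (r / 2) ^ 2 = 4 * (1 + a) * (r ^ 2)⁻¹ by field_simp; ring,
      Real.mul_rpow (by positivity) (by positivity), Real.inv_rpow (by positivity),
      ← Real.rpow_natCast, ← Real.rpow_mul hr.le, ← Real.rpow_neg hr.le]
    congr 2
    push_cast
    ring
  unfold pKer
  split_ifs with hs
  · rw [← hconst]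
    refine ENNReal.ofReal_le_ofReal (Real.rpow_neg_mul_exp_neg_div_le_of_le (by linarith) hs
      (sq_nonneg _) (half_pos hr) ?_)
    rw [mem_pCyl_zero, not_and, not_and, not_lt] at hw
    rcases le_or_gt (r / 2) ‖w.2‖ with h | h
    · exact Or.inr (pow_le_pow_left₀ (half_pos hr).le h 2)
    · exact Or.inl (hw h hs.le)
  · exact zero_le

def potentialConst (d : ℕ) (α : ℝ) : ℝ≥0∞ :=
  ENNReal.ofReal ((4 * (1 + ((d : ℝ) + 2 - α) / 2)) ^ (((d : ℝ) + 2 - α) / 2)) *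
    volume (Metric.ball (0 : Ed d) 1)

theorem potentialConst_ne_top (d : ℕ) (α : ℝ) : potentialConst d α ≠ ⊤ :=
  ENNReal.mul_ne_top ENNReal.ofReal_ne_top measure_ball_lt_top.ne

theorem potentialConst_ne_zero {d : ℕ} {α : ℝ} (hα : α < (d : ℝ) + 2) : potentialConst d α ≠ 0 :=
  mul_ne_zero (by simp only [ne_eq, ENNReal.ofReal_eq_zero, not_le]; positivity)
    (Metric.measure_ball_pos _ _ one_pos).ne'

theorem Palpha_indicator_le_tsum {d : ℕ} {α : ℝ} (hα : α < (d : ℝ) + 2) (β : ℝ)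
    {f : Pt d → ℝ≥0∞} (hf : Measurable f) (S : Set (Pt d)) {ι : Type*} [Countable ι]
    {r : ι → ℝ} (hr : ∀ i, 0 < r i)
    (hcover : ∀ w ∈ S, 0 < w.1 → ∃ i, w ∈ pCyl d (r i) 0 ∧ w ∉ pCyl d (r i / 2) 0) :
    Palpha d α (S.indicator f) 0 ≤
      potentialConst d α * (∑' i, ENNReal.ofReal (r i ^ (α - β))) * Mbeta d β f 0 := by
  set A := (4 * (1 + ((d : ℝ) + 2 - α) / 2)) ^ (((d : ℝ) + 2 - α) / 2)
  have hA : 0 ≤ A := by positivity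
  set K := S.indicator fun w : Pt d => pKer d α w.1 ‖w.2‖
  have hPalpha : Palpha d α (S.indicator f) 0 = ∫⁻ w, K w * f w := by
    simp only [Palpha, Prod.fst_zero, Prod.snd_zero, zero_add, Prod.mk.eta]
    congr 1
    ext w
    by_cases hw : w ∈ S <;> simp [K, hw]
  have hK : ∀ w, K w ≠ 0 → ∃ i,
      w ∈ pCyl d (r i) 0 ∧ K w ≤ ENNReal.ofReal (A * r i ^ (α - ((d : ℝ) + 2))) := by
    intro w hw
    have hwS : w ∈ S := by by_contra hwS; simp [K, hwS] at hw
    simp only [K, indicator_of_mem hwS] at hw ⊢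
    have hs : 0 < w.1 := by by_contra hs; simp [pKer, hs] at hw
    obtain ⟨i, hwi, hwi'⟩ := hcover w hwS hs
    exact ⟨i, hwi, pKer_le_of_notMem_pCyl hα (hr i) hwi'⟩
  have hexp : ∀ i, ENNReal.ofReal (A * r i ^ (α - ((d : ℝ) + 2))) *
      ENNReal.ofReal (r i ^ ((d : ℝ) + 2 - β)) =
        ENNReal.ofReal A * ENNReal.ofReal (r i ^ (α - β)) := fun i => by
    rw [← ENNReal.ofReal_mul (mul_nonneg hA (Real.rpow_nonneg (hr i).le _)),
      ← ENNReal.ofReal_mul hA, mul_assoc, ← Real.rpow_add (hr i)]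
    ring_nf
  calc Palpha d α (S.indicator f) 0
      ≤ ∑' i, ENNReal.ofReal (A * r i ^ (α - ((d : ℝ) + 2))) * ∫⁻ w in pCyl d (r i) 0, f w := by
        rw [hPalpha]
        exact lintegral_mul_le_tsum_mul_setLIntegral _ hf (fun i => measurableSet_pCyl d _ _) hK
    _ ≤ ∑' i, ENNReal.ofReal (A * r i ^ (α - ((d : ℝ) + 2))) *
          (ENNReal.ofReal (r i ^ ((d : ℝ) + 2 - β)) * volume (Metric.ball (0 : Ed d) 1) *
            Mbeta d β f 0) := by
        gcongr with i
        exact setLIntegral_pCyl_le_Mbeta d β f (hr i) 0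
    _ = _ := by
        simp_rw [← mul_assoc, hexp]
        rw [ENNReal.tsum_mul_right, ENNReal.tsum_mul_right, ENNReal.tsum_mul_left, potentialConst]
        ring

theorem exists_pCyl_shell_of_mem {d : ℕ} {ρ : ℝ} (hρ : 0 < ρ) {w : Pt d}
    (hw : w ∈ pCyl d ρ 0) (hs : 0 < w.1) :
    ∃ k : ℕ, w ∈ pCyl d (ρ * (1 / 2) ^ k) 0 ∧ w ∉ pCyl d (ρ * (1 / 2) ^ k / 2) 0 := by
  obtain ⟨n, hn⟩ := exists_pow_lt_of_lt_one (div_pos (Real.sqrt_pos.mpr hs) hρ)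
    (by norm_num : (1 / 2 : ℝ) < 1)
  have hout : w ∉ pCyl d (ρ * (1 / 2) ^ n) 0 := by
    rw [lt_div_iff₀ hρ, mul_comm, Real.lt_sqrt (by positivity)] at hn
    rw [mem_pCyl_zero, not_and, not_and, not_lt]
    exact fun _ _ => hn.le
  obtain ⟨k, hk, hk'⟩ := exists_mem_and_notMem_succ (S := fun k => pCyl d (ρ * (1 / 2) ^ k) 0)
    (by simpa using hw) hout
  refine ⟨k, hk, ?_⟩
  rwa [pow_succ, ← mul_assoc, ← div_eq_mul_one_div] at hk'

theorem exists_pCyl_shell_of_notMem {d : ℕ} {ρ : ℝ} (hρ : 0 < ρ) {w : Pt d}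
    (hw : w ∉ pCyl d ρ 0) (hs : 0 ≤ w.1) :
    ∃ k : ℕ, w ∈ pCyl d (2 * ρ * 2 ^ k) 0 ∧ w ∉ pCyl d (2 * ρ * 2 ^ k / 2) 0 := by
  obtain ⟨n, hn⟩ := pow_unbounded_of_one_lt ((‖w.2‖ + √w.1) / ρ) one_lt_two
  rw [div_lt_iff₀ hρ, mul_comm] at hn
  have hin : w ∈ pCyl d (ρ * 2 ^ n) 0 :=
    mem_pCyl_zero.mpr ⟨by linarith [Real.sqrt_nonneg w.1], hs,
      Real.lt_sq_of_sqrt_lt (by linarith [norm_nonneg w.2])⟩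
  obtain ⟨k, hk, hk'⟩ := exists_mem_and_notMem_succ (S := fun k => (pCyl d (ρ * 2 ^ k) 0)ᶜ)
    (by simpa using hw) (not_not.mpr hin)
  refine ⟨k, ?_⟩
  rw [show 2 * ρ * 2 ^ k = ρ * 2 ^ (k + 1) by ring, show ρ * 2 ^ (k + 1) / 2 = ρ * 2 ^ k by ring]
  exact ⟨not_not.mp hk', hk⟩

theorem Palpha_indicator_pCyl_le {d : ℕ} {α : ℝ} (hα : α < (d : ℝ) + 2) {f : Pt d → ℝ≥0∞}
    (hf : Measurable f) {ρ : ℝ} (hρ : 0 < ρ) :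
    Palpha d α ((pCyl d ρ 0).indicator f) 0 ≤
      potentialConst d α * (1 - ENNReal.ofReal ((1 / 2) ^ α))⁻¹ *
        (ENNReal.ofReal (ρ ^ α) * Mbeta d 0 f 0) := by
  calc Palpha d α ((pCyl d ρ 0).indicator f) 0
      ≤ potentialConst d α * (∑' k : ℕ, ENNReal.ofReal ((ρ * (1 / 2) ^ k) ^ (α - 0))) *
          Mbeta d 0 f 0 :=
        Palpha_indicator_le_tsum hα 0 hf _ (fun k => by positivity)
          fun w hw hs => exists_pCyl_shell_of_mem hρ hw hs
    _ = _ := by rw [sub_zero, ENNReal.tsum_ofReal_mul_pow_rpow hρ.le (by norm_num)]; ring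

theorem Palpha_indicator_compl_pCyl_le {d : ℕ} {α β : ℝ} (hα : α < (d : ℝ) + 2) (hαβ : α ≤ β)
    {f : Pt d → ℝ≥0∞} (hf : Measurable f) {ρ : ℝ} (hρ : 0 < ρ) :
    Palpha d α ((pCyl d ρ 0)ᶜ.indicator f) 0 ≤
      potentialConst d α * (1 - ENNReal.ofReal (2 ^ (α - β)))⁻¹ *
        (ENNReal.ofReal (ρ ^ (α - β)) * Mbeta d β f 0) := by
  calc Palpha d α ((pCyl d ρ 0)ᶜ.indicator f) 0
      ≤ potentialConst d α * (∑' k : ℕ, ENNReal.ofReal ((2 * ρ * 2 ^ k) ^ (α - β))) *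
          Mbeta d β f 0 :=
        Palpha_indicator_le_tsum hα β hf _ (fun k => by positivity)
          fun w hw hs => exists_pCyl_shell_of_notMem hρ hw hs.le
    _ = potentialConst d α * (1 - ENNReal.ofReal (2 ^ (α - β)))⁻¹ *
          (ENNReal.ofReal ((2 * ρ) ^ (α - β)) * Mbeta d β f 0) := by
        rw [ENNReal.tsum_ofReal_mul_pow_rpow (by positivity) (by norm_num)]; ring
    _ ≤ _ := by
        gcongr _ * (ENNReal.ofReal ?_ * _)
        exact Real.rpow_le_rpow_of_nonpos hρ (by linarith) (by linarith)

theorem stmt1_general (d : ℕ) (α β : ℝ) (hα : 0 < α) (hαβ : α < β)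
    (hβ : β ≤ (d : ℝ) + 2) :
    ∃ N : ℝ, 0 < N ∧ ∀ f : Pt d → ℝ≥0∞, Measurable f → ∀ ρ : ℝ, 0 < ρ →
      Palpha d α ((pCyl d ρ 0).indicator f) 0 ≤
        ENNReal.ofReal (N * ρ ^ α) * Mbeta d 0 f 0 ∧
      Palpha d α ((pCyl d ρ 0)ᶜ.indicator f) 0 ≤
        ENNReal.ofReal (N * ρ ^ (α - β)) * Mbeta d β f 0 := by
  have hαd : α < (d : ℝ) + 2 := hαβ.trans_le hβ
  set G₁ := (1 - ENNReal.ofReal ((1 / 2 : ℝ) ^ α))⁻¹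
  set G₂ := (1 - ENNReal.ofReal ((2 : ℝ) ^ (α - β)))⁻¹
  set N := potentialConst d α * (G₁ + G₂)
  have hNtop : N ≠ ⊤ := ENNReal.mul_ne_top (potentialConst_ne_top d α) <|
    ENNReal.add_ne_top.mpr
      ⟨ENNReal.inv_one_sub_ofReal_ne_top (Real.rpow_lt_one (by norm_num) (by norm_num) hα),
        ENNReal.inv_one_sub_ofReal_ne_top (Real.rpow_lt_one_of_one_lt_of_neg one_lt_two
          (by linarith))⟩
  have hN0 : N ≠ 0 := mul_ne_zero (potentialConst_ne_zero hαd) (by simp [G₁])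
  have hofReal : ∀ t, ENNReal.ofReal (N.toReal * t) = N * ENNReal.ofReal t := fun t => by
    rw [ENNReal.ofReal_mul ENNReal.toReal_nonneg, ENNReal.ofReal_toReal hNtop]
  refine ⟨N.toReal, ENNReal.toReal_pos hN0 hNtop, fun f hf ρ hρ => ⟨?_, ?_⟩⟩
  · refine (Palpha_indicator_pCyl_le hαd hf hρ).trans ?_
    rw [hofReal, mul_assoc N]
    gcongr
    exact mul_le_mul_right le_self_add _
  · refine (Palpha_indicator_compl_pCyl_le hαd hαβ.le hf hρ).trans ?_
    rw [hofReal, mul_assoc N]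
    gcongr
    exact mul_le_mul_right le_add_self _

/-- Lemma 2.2, (2.2): for `α ∈ (0,β)`, `β ∈ (0, d+2]` there is `N = N(d,α,β)`
such that `P_α(1_{C_ρ} f)(0) ≤ N ρ^α M f(0)` and `P_α(1_{C_ρ^c} f)(0) ≤ N ρ^{α-β} M_β f(0)`. -/
theorem stmt1 (d : ℕ) (hd : 1 ≤ d) (α β : ℝ) (hα : 0 < α) (hαβ : α < β)
    (hβ : β ≤ (d : ℝ) + 2) :
    ∃ N : ℝ, 0 < N ∧ ∀ f : Pt d → ℝ≥0∞, Measurable f → ∀ ρ : ℝ, 0 < ρ →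
      Palpha d α ((pCyl d ρ 0).indicator f) 0 ≤
        ENNReal.ofReal (N * ρ ^ α) * Mbeta d 0 f 0 ∧
      Palpha d α ((pCyl d ρ 0)ᶜ.indicator f) 0 ≤
        ENNReal.ofReal (N * ρ ^ (α - β)) * Mbeta d β f 0 :=
  stmt1_general d α β hα hαβ hβ

end
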